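/- Let F : ℝ^m → ℝ^k be a ReLU or hard-tanh network with fixed weights and biases, and let x(t) = x_0 + t(x_1 − x_0) be an affine trajectory with x_0 ≠ x_1. For each activation pattern P, the set {t ∈ ℝ : the activation pattern of F at x(t) equals P} is convex (an interval). Consequently, ℝ is partitioned into intervals separated by the neuron transition points, and every interval carries a unique activation pattern of the network. -/

import Mathlib

/-- Preactivations of a feedforward network with coordinatewise nonlinearity `φ`:
`h^{(0)} = W^{(0)} x + b^{(0)}` and `h^{(d+1)} = W^{(d+1)} φ(h^{(d)}) + b^{(d+1)}`. -/
noncomputable def preactNet {m k : ℕ} (φ : ℝ → ℝ) (W0 : Matrix (Fin k) (Fin m) ℝ)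
    (W : ℕ → Matrix (Fin k) (Fin k) ℝ) (b : ℕ → Fin k → ℝ) (x : Fin m → ℝ) :
    ℕ → Fin k → ℝ
  | 0 => W0.mulVec x + b 0
  | d + 1 => (W (d + 1)).mulVec (fun i => φ (preactNet φ W0 W b x d i)) + b (d + 1)

/-- Activation pattern of a ReLU network: for each hidden neuron, `1` if its preactivation
is positive (linear region where ReLU is the identity) and `0` otherwise. -/
noncomputable def reluPatternAt (m k n : ℕ) (W0 : Matrix (Fin k) (Fin m) ℝ)
    (W : ℕ → Matrix (Fin k) (Fin k) ℝ) (b : ℕ → Fin k → ℝ) (x : Fin m → ℝ) :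
    Fin n → Fin k → ℤ :=
  fun d i => if 0 < preactNet (fun u => max u 0) W0 W b x d i then 1 else 0

/-- Activation pattern of a hard-tanh network: for each hidden neuron, `−1`, `0` or `1`
according as its preactivation lies in `(−∞,−1]`, `(−1,1)` or `[1,∞)`. -/
noncomputable def htPatternAt (m k n : ℕ) (W0 : Matrix (Fin k) (Fin m) ℝ)
    (W : ℕ → Matrix (Fin k) (Fin k) ℝ) (b : ℕ → Fin k → ℝ) (x : Fin m → ℝ) :
    Fin n → Fin k → ℤ :=
  fun d i =>
    if preactNet (fun u => max (-1) (min 1 u)) W0 W b x d i ≤ -1 then -1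
    else if 1 ≤ preactNet (fun u => max (-1) (min 1 u)) W0 W b x d i then 1
    else 0

/-! On each of its linear regions the nonlinearity is an affine map, and each region is an
interval. So if two inputs `x`, `y` have the same activation pattern, induction on the depth shows
that the preactivations at `s • x + t • y` (`s, t ≥ 0`, `s + t = 1`) are the same convex combination
of those at `x` and `y`: neuron by neuron, both preactivations lie in one convex region, on which
the nonlinearity commutes with convex combinations. The combined preactivation then lies in that
region too, so `s • x + t • y` has the same pattern. Every activation region is thus convex in the
input space, and its preimage under the affine trajectory `t ↦ x₀ + t (x₁ − x₀)` is an interval. -/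

open Set Matrix

def AffineOnFibers (φ : ℝ → ℝ) (g : ℝ → ℤ) : Prop :=
  ∀ p, ∃ a c : ℝ, ∀ u ∈ g ⁻¹' {p}, φ u = a * u + c

/-- The activation pattern at depths `< n` of the network with nonlinearity `φ`, where `g u`
names the linear region of `φ` containing `u`. -/
noncomputable def activationPattern {m k : ℕ} (φ : ℝ → ℝ) (g : ℝ → ℤ) (n : ℕ)
    (W0 : Matrix (Fin k) (Fin m) ℝ) (W : ℕ → Matrix (Fin k) (Fin k) ℝ) (b : ℕ → Fin k → ℝ) (x : Fin m → ℝ) :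
    Fin n → Fin k → ℤ :=
  fun d i => g (preactNet φ W0 W b x d i)

section ActivationRegions

variable {m k : ℕ} {φ : ℝ → ℝ} {g : ℝ → ℤ}

lemma Matrix.mulVec_combo_add (M : Matrix (Fin k) (Fin m) ℝ) (c : Fin k → ℝ)
    {u v : Fin m → ℝ} {s t : ℝ} (hst : s + t = 1) :
    M *ᵥ (s • u + t • v) + c = s • (M *ᵥ u + c) + t • (M *ᵥ v + c) := by
  obtain rfl : t = 1 - s := by linarith
  rw [Matrix.mulVec_add, Matrix.mulVec_smul, Matrix.mulVec_smul]
  module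

lemma apply_combo_of_region_eq (hφ : AffineOnFibers φ g)
    (hg : ∀ p, Convex ℝ (g ⁻¹' {p})) {u v s t : ℝ} (huv : g u = g v)
    (hs : 0 ≤ s) (ht : 0 ≤ t) (hst : s + t = 1) :
    φ (s * u + t * v) = s * φ u + t * φ v := by
  obtain ⟨a, c, hac⟩ := hφ (g u)
  have hw : g (s * u + t * v) = g u := hg (g u) rfl huv.symm hs ht hst
  rw [hac _ hw, hac u rfl, hac v huv.symm]
  linear_combination -c * hst

lemma preactNet_combo (hφ : AffineOnFibers φ g)
    (hg : ∀ p, Convex ℝ (g ⁻¹' {p})) (W0 : Matrix (Fin k) (Fin m) ℝ)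
    (W : ℕ → Matrix (Fin k) (Fin k) ℝ) (b : ℕ → Fin k → ℝ) {x y : Fin m → ℝ} {s t : ℝ}
    (hs : 0 ≤ s) (ht : 0 ≤ t) (hst : s + t = 1) :
    ∀ d, (∀ d' < d, ∀ i, g (preactNet φ W0 W b x d' i) = g (preactNet φ W0 W b y d' i)) →
      preactNet φ W0 W b (s • x + t • y) d
        = s • preactNet φ W0 W b x d + t • preactNet φ W0 W b y d
  | 0, _ => Matrix.mulVec_combo_add W0 (b 0) hst
  | d + 1, hxy => by
    have hd := preactNet_combo hφ hg W0 W b hs ht hst d fun d' hd' => hxy d' (by omega)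
    have hact : (fun i => φ (preactNet φ W0 W b (s • x + t • y) d i))
        = s • (fun i => φ (preactNet φ W0 W b x d i))
          + t • (fun i => φ (preactNet φ W0 W b y d i)) := by
      funext i
      simp only [hd, Pi.add_apply, Pi.smul_apply, smul_eq_mul]
      exact apply_combo_of_region_eq hφ hg (hxy d d.lt_succ_self i) hs ht hst
    simp only [preactNet]
    rw [hact]
    exact Matrix.mulVec_combo_add _ _ hst

theorem convex_setOf_activationPattern_eq (hφ : AffineOnFibers φ g)
    (hg : ∀ p, Convex ℝ (g ⁻¹' {p})) (n : ℕ) (W0 : Matrix (Fin k) (Fin m) ℝ)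
    (W : ℕ → Matrix (Fin k) (Fin k) ℝ) (b : ℕ → Fin k → ℝ) (P : Fin n → Fin k → ℤ) :
    Convex ℝ {x | activationPattern φ g n W0 W b x = P} := by
  intro x hx y hy s t hs ht hst
  have hxy : ∀ d : Fin n, ∀ d' < (d : ℕ), ∀ i,
      g (preactNet φ W0 W b x d' i) = g (preactNet φ W0 W b y d' i) := fun d d' hd' i =>
    (congrFun₂ hx ⟨d', hd'.trans d.2⟩ i).trans (congrFun₂ hy ⟨d', hd'.trans d.2⟩ i).symm
  funext d i
  change g (preactNet φ W0 W b (s • x + t • y) d i) = P d i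
  rw [preactNet_combo hφ hg W0 W b hs ht hst d (hxy d)]
  exact hg (P d i) (congrFun₂ hx d i) (congrFun₂ hy d i) hs ht hst

end ActivationRegions

lemma Convex.setOf_trajectory_mem {ι : Type*} {S : Set (ι → ℝ)} (hS : Convex ℝ S)
    (x₀ x₁ : ι → ℝ) : Convex ℝ {t : ℝ | (fun j => x₀ j + t * (x₁ j - x₀ j)) ∈ S} := by
  have htraj : ∀ t : ℝ, (fun j => x₀ j + t * (x₁ j - x₀ j)) = AffineMap.lineMap x₀ x₁ t := by
    intro t
    funext j
    simp only [AffineMap.lineMap_apply_module', Pi.add_apply, Pi.smul_apply, Pi.sub_apply,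
      smul_eq_mul]
    ring
  simp only [htraj]
  exact hS.affine_preimage (AffineMap.lineMap x₀ x₁)

noncomputable def reluRegion (u : ℝ) : ℤ := if 0 < u then 1 else 0

noncomputable def hardTanhRegion (u : ℝ) : ℤ := if u ≤ -1 then -1 else if 1 ≤ u then 1 else 0

lemma reluRegion_monotone : Monotone reluRegion := by
  intro u v huv
  unfold reluRegion
  split_ifs <;> linarith

lemma hardTanhRegion_monotone : Monotone hardTanhRegion := by
  intro u v huv
  unfold hardTanhRegion
  split_ifs <;> linarith

lemma affineOnFibers_relu : AffineOnFibers (fun u => max u 0) reluRegion := by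
  intro p
  refine ⟨p, 0, ?_⟩
  rintro u rfl
  unfold reluRegion
  split_ifs with hu
  · simp [hu.le]
  · simp [not_lt.1 hu]

lemma affineOnFibers_hardTanh :
    AffineOnFibers (fun u => max (-1) (min 1 u)) hardTanhRegion := by
  intro p
  -- slope `1` on the middle region `p = 0`, slope `0` on the saturated regions `p = ±1`
  refine ⟨1 - p ^ 2, p, ?_⟩
  rintro u rfl
  dsimp only
  unfold hardTanhRegion
  split_ifs with h₁ h₂
  · rw [min_eq_right (by linarith), max_eq_left h₁]
    norm_num
  · rw [min_eq_left h₂, max_eq_right (by norm_num)]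
    norm_num
  · rw [min_eq_right (by linarith), max_eq_right (by linarith)]
    norm_num

lemma Monotone.convex_preimage_singleton {g : ℝ → ℤ} (hg : Monotone g) (p : ℤ) :
    Convex ℝ (g ⁻¹' {p}) :=
  convex_iff_ordConnected.2 (ordConnected_singleton.preimage_mono hg)

theorem activationPattern_interval_of_affine_trajectory_general (m k n : ℕ)
    (W0 : Matrix (Fin k) (Fin m) ℝ) (W : ℕ → Matrix (Fin k) (Fin k) ℝ)
    (b : ℕ → Fin k → ℝ) (x₀ x₁ : Fin m → ℝ) :
    (∀ P : Fin n → Fin k → ℤ,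
      Convex ℝ {t : ℝ |
        reluPatternAt m k n W0 W b (fun j => x₀ j + t * (x₁ j - x₀ j)) = P}) ∧
    (∀ P : Fin n → Fin k → ℤ,
      Convex ℝ {t : ℝ |
        htPatternAt m k n W0 W b (fun j => x₀ j + t * (x₁ j - x₀ j)) = P}) :=
  -- `reluPatternAt` and `htPatternAt` unfold to `activationPattern` with these region labels
  ⟨fun P => (convex_setOf_activationPattern_eq affineOnFibers_relu
      reluRegion_monotone.convex_preimage_singleton n W0 W b P).setOf_trajectory_mem x₀ x₁,
    fun P => (convex_setOf_activationPattern_eq affineOnFibers_hardTanh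
      hardTanhRegion_monotone.convex_preimage_singleton n W0 W b P).setOf_trajectory_mem x₀ x₁⟩

/-- **Transitions and activation patterns along an affine trajectory.**
For a ReLU or hard-tanh network and an affine trajectory `x(t) = x₀ + t (x₁ − x₀)` with
`x₀ ≠ x₁`, the set of parameters `t ∈ ℝ` realizing any given activation pattern `P` is
convex (an interval).  Consequently `ℝ` is partitioned into intervals, separated by the
neuron transition points, each carrying a unique activation pattern. -/
theorem activationPattern_interval_of_affine_trajectory (m k n : ℕ)
    (W0 : Matrix (Fin k) (Fin m) ℝ) (W : ℕ → Matrix (Fin k) (Fin k) ℝ)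
    (b : ℕ → Fin k → ℝ) (x₀ x₁ : Fin m → ℝ) (hx : x₀ ≠ x₁) :
    (∀ P : Fin n → Fin k → ℤ,
      Convex ℝ {t : ℝ |
        reluPatternAt m k n W0 W b (fun j => x₀ j + t * (x₁ j - x₀ j)) = P}) ∧
    (∀ P : Fin n → Fin k → ℤ,
      Convex ℝ {t : ℝ |
        htPatternAt m k n W0 W b (fun j => x₀ j + t * (x₁ j - x₀ j)) = P}) :=
  activationPattern_interval_of_affine_trajectory_general m k n W0 W b x₀ x₁
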